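/- arXiv:1709.00629 — 2 statements merged into one kernel-verified Lean document; each statement's English description precedes it below -/
import Mathlib

section
/- For every real $s > 0$ and every $y \in \mathbb{R}$, the following Fourier inversion identity for the Gamma function holds: $\frac{1}{2\pi}\int_{-\infty}^{\infty} e^{-i\omega y}\,\Gamma(s + i\omega)\,d\omega = e^{sy}\exp(-e^{y})$. -/
/-!
`Γ` is the Mellin transform of `t ↦ e^{-t}`, and on the line `Re z = s` it is integrable because
`‖Γ(s + iω)‖ (1 + ω²) ≤ Γ(s) + Γ(s + 2)`. Mellin inversion therefore recovers `e^{-x}` from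
`Γ`; at `x = e^y` the kernel `x^{-(s + iω)}` is `e^{-sy} e^{-iωy}`.
-/

open Complex MeasureTheory Set

lemma mellinInv_exp {E : Type*} [NormedAddCommGroup E] [NormedSpace ℂ E]
    (σ : ℝ) (f : ℂ → E) (y : ℝ) :
    mellinInv σ f (Real.exp y) = Real.exp (-(σ * y)) •
      ((1 / (2 * Real.pi) : ℂ) • ∫ ω : ℝ, Complex.exp (-(I * ω * y)) • f (σ + ω * I)) := by
  have hpow : ∀ ω : ℝ, ((Real.exp y : ℝ) : ℂ) ^ (-((σ : ℂ) + ω * I)) =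
      (Real.exp (-(σ * y)) : ℂ) * Complex.exp (-(I * ω * y)) := fun ω => by
    rw [ofReal_exp, cpow_def_of_ne_zero (Complex.exp_ne_zero _),
      log_exp (by simpa using Real.pi_pos) (by simpa using Real.pi_nonneg), ofReal_exp,
      ← Complex.exp_add]
    push_cast
    ring_nf
  simp_rw [mellinInv, hpow, mul_smul, integral_smul]
  rw [← coe_smul, ← coe_smul, smul_comm]
  push_cast
  rfl

namespace Complex

lemma norm_Gamma_le_Gamma_re {z : ℂ} (hz : 0 < z.re) : ‖Gamma z‖ ≤ Real.Gamma z.re := by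
  rw [Gamma_eq_integral hz, GammaIntegral, Real.Gamma_eq_integral hz]
  refine (norm_integral_le_integral_norm _).trans_eq <|
    setIntegral_congr_fun measurableSet_Ioi fun x hx => ?_
  simp [norm_cpow_eq_rpow_re_of_pos hx, norm_exp]

-- `Γ(z + 2) = (z + 1) z Γ(z)` trades two powers of `|Im z|` for a shift of the real part.
lemma norm_Gamma_mul_sq_im_le {z : ℂ} (hz : 0 < z.re) :
    ‖Gamma z‖ * z.im ^ 2 ≤ Real.Gamma (z.re + 2) := by
  have hz0 : z ≠ 0 := fun h => by simp [h] at hz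
  have hz1 : z + 1 ≠ 0 := fun h => by
    have : z.re + 1 = 0 := by simpa using congrArg re h
    linarith
  have hshift : Gamma (z + 2) = (z + 1) * z * Gamma z := by
    rw [show z + 2 = z + 1 + 1 by ring, Gamma_add_one _ hz1, Gamma_add_one _ hz0, mul_assoc]
  have him : z.im ^ 2 ≤ ‖z + 1‖ * ‖z‖ := by
    rw [sq, ← abs_mul_abs_self]
    exact mul_le_mul (by simpa using abs_im_le_norm (z + 1)) (abs_im_le_norm z)
      (abs_nonneg _) (norm_nonneg _)
  calc ‖Gamma z‖ * z.im ^ 2 ≤ ‖Gamma z‖ * (‖z + 1‖ * ‖z‖) := by gcongr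
    _ = ‖Gamma (z + 2)‖ := by rw [hshift, norm_mul, norm_mul]; ring
    _ ≤ Real.Gamma (z.re + 2) := by
      simpa using norm_Gamma_le_Gamma_re (z := z + 2) (by simp; linarith)

lemma norm_Gamma_le_div_one_add_sq_im {z : ℂ} (hz : 0 < z.re) :
    ‖Gamma z‖ ≤ (Real.Gamma z.re + Real.Gamma (z.re + 2)) * (1 + z.im ^ 2)⁻¹ := by
  rw [le_mul_inv_iff₀ (by positivity), mul_one_add]
  exact add_le_add (by simpa using norm_Gamma_le_Gamma_re hz) (norm_Gamma_mul_sq_im_le hz)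

lemma continuous_Gamma_vertical {s : ℝ} (hs : 0 < s) :
    Continuous fun ω : ℝ => Gamma (s + ω * I) := by
  refine continuous_iff_continuousAt.mpr fun ω => ContinuousAt.comp (g := Gamma) ?_ (by fun_prop)
  refine (differentiableAt_Gamma _ fun m h => ?_).continuousAt
  have : s = -(m : ℝ) := by simpa using congrArg re h
  linarith [(m.cast_nonneg : (0 : ℝ) ≤ m)]

lemma verticalIntegrable_Gamma {s : ℝ} (hs : 0 < s) : VerticalIntegrable Gamma s := by
  refine (integrable_inv_one_add_sq.const_mul (Real.Gamma s + Real.Gamma (s + 2))).mono'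
    (continuous_Gamma_vertical hs).aestronglyMeasurable (Filter.Eventually.of_forall fun ω => ?_)
  simpa using norm_Gamma_le_div_one_add_sq_im (z := s + ω * I) (by simpa using hs)

lemma mellinConvergent_exp_neg {z : ℂ} (hz : 0 < z.re) :
    MellinConvergent (fun t : ℝ => (Real.exp (-t) : ℂ)) z :=
  (GammaIntegral_convergent hz).congr_fun (fun t _ => by simp [mul_comm]) measurableSet_Ioi

lemma mellin_exp_neg {z : ℂ} (hz : 0 < z.re) :
    mellin (fun t : ℝ => (Real.exp (-t) : ℂ)) z = Gamma z := by
  rw [Gamma_eq_integral hz, GammaIntegral_eq_mellin]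

lemma mellinInv_Gamma {s : ℝ} (hs : 0 < s) {x : ℝ} (hx : 0 < x) :
    mellinInv s Gamma x = Real.exp (-x) := by
  have hline : ∀ ω : ℝ, 0 < ((s : ℂ) + ω * I).re := fun ω => by simpa using hs
  have hmellin :
      mellinInv s Gamma x = mellinInv s (mellin fun t : ℝ => (Real.exp (-t) : ℂ)) x := by
    simp only [mellinInv, mellin_exp_neg (hline _)]
  rw [hmellin]
  refine mellinInv_mellin_eq s _ hx (mellinConvergent_exp_neg (by simpa using hs)) ?_
    (by fun_prop)
  exact (verticalIntegrable_Gamma hs).congr (Filter.Eventually.of_forall fun ω =>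
    (mellin_exp_neg (hline ω)).symm)

end Complex

/-- Fourier inversion identity for the Gamma function:
`(2π)⁻¹ ∫ e^{-iωy} Γ(s+iω) dω = e^{sy} exp(-e^y)`. -/
theorem stmt10 (s : ℝ) (hs : 0 < s) (y : ℝ) :
    (1 / (2 * Real.pi) : ℂ) *
        ∫ ω : ℝ, Complex.exp (-(Complex.I * ω * y)) * Complex.Gamma (s + ω * Complex.I)
      = ((Real.exp (s * y) * Real.exp (-Real.exp y) : ℝ) : ℂ) := by
  have hinv := mellinInv_Gamma hs (Real.exp_pos y)
  rw [mellinInv_exp, real_smul] at hinv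
  simp only [smul_eq_mul] at hinv
  rw [ofReal_mul, ← hinv, ← mul_assoc, ← ofReal_mul, ← Real.exp_add, add_neg_cancel,
    Real.exp_zero, ofReal_one, one_mul]
end

section
/- (Bias bound for log-kernel smoothing, simplest case $\beta \le 1$.) Let $x > 0$, $r > 1$, $A > 0$, $0 < \beta \le 1$, and let $f$ be a probability density on $(0,\infty)$ satisfying $|f(u) - f(v)| \le A|u-v|^{\beta}$ for all $u,v \in [x/r, rx]$ and $f(u) \le A$ for $u \in [x/r, rx]$. Let $K : [-1,1] \to \mathbb{R}$ be bounded with $\int_{-1}^{1}K(t)\,dt = 1$, and for $0 < h < \min(\ln r, 1)$ set $K_h(x,y) = \frac{1}{xh}K\big(\frac{\ln(y/x)}{h}\big)$ for $y > 0$. Then there is a constant $c$ depending only on $\beta$ such that $\Big|\int_0^\infty K_h(x,y)f(y)\,dy - f(x)\Big| \le c\,A\,\|K\|_1\,\big[h^{\beta}x^{\beta} + h\big]$, where $\|K\|_1 = \int_{-1}^1|K(t)|\,dt$. -/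
/-!
Substituting `y = x e^{th}` turns the smoothed density into `∫_{-1}^{1} K(t) w(th) dt` with
`w(s) = e^s f(x e^s)` and `w(0) = f(x)`. Since `∫ K = 1`, the bias is `∫ K(t) (w(th) - w(0)) dt`,
and for `|s| ≤ h < 1` the point `x e^s` stays in `[x/r, rx]`, so Hölder continuity and `f ≤ A`
together with `|e^s - 1| ≤ 2|s|` give `|w(s) - w(0)| ≤ 6A (h^β x^β + h)`.
-/

open MeasureTheory Real Set

section ChangeOfVariables

variable {E : Type*} [NormedAddCommGroup E] [NormedSpace ℝ E]

theorem integral_Ioi_zero_eq_integral_exp_smul (g : ℝ → E) :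
    ∫ y in Ioi 0, g y = ∫ t, exp t • g (exp t) := by
  rw [← range_exp, ← image_univ, integral_image_eq_integral_abs_deriv_smul MeasurableSet.univ
    (fun t _ ↦ (hasDerivAt_exp t).hasDerivWithinAt) exp_injective.injOn, setIntegral_univ]
  simp only [abs_of_pos (exp_pos _)]

theorem integral_Ioi_zero_eq_integral_mul_exp_mul (g : ℝ → E) {x h : ℝ} (hx : 0 < x)
    (hh : 0 < h) :
    ∫ y in Ioi 0, g y = ∫ t, (x * h * exp (t * h)) • g (x * exp (t * h)) := by
  have hscale := integral_comp_mul_left_Ioi g 0 hx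
  rw [mul_zero, eq_inv_smul_iff₀ hx.ne'] at hscale
  have hdilate := Measure.integral_comp_mul_right (fun s ↦ exp s • g (x * exp s)) h
  rw [abs_inv, abs_of_pos hh, eq_inv_smul_iff₀ hh.ne'] at hdilate
  rw [← hscale, integral_Ioi_zero_eq_integral_exp_smul, ← hdilate, ← integral_smul,
    ← integral_smul]
  simp only [smul_smul, mul_assoc]

end ChangeOfVariables

theorem integral_logKernel_eq {x h : ℝ} (hx : 0 < x) (hh : 0 < h) (K f : ℝ → ℝ) :
    ∫ y in Ioi 0, 1 / (x * h) * K (log (y / x) / h) * f y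
      = ∫ t, K t * (exp (t * h) * f (x * exp (t * h))) := by
  rw [integral_Ioi_zero_eq_integral_mul_exp_mul _ hx hh]
  congr 1 with t
  rw [mul_div_cancel_left₀ _ hx.ne', log_exp, mul_div_cancel_right₀ _ hh.ne', smul_eq_mul]
  field_simp

theorem abs_setIntegral_mul_sub_le {α : Type*} [MeasurableSpace α] {μ : Measure α} {s : Set α}
    (hs : MeasurableSet s) {K w : α → ℝ} {a M : ℝ} (hK : IntegrableOn K s μ)
    (hw : AEStronglyMeasurable w (μ.restrict s)) (hK1 : ∫ t in s, K t ∂μ = 1)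
    (hwa : ∀ t ∈ s, |w t - a| ≤ M) :
    |∫ t in s, K t * w t ∂μ - a| ≤ (∫ t in s, |K t| ∂μ) * M := by
  have hKwa : IntegrableOn (fun t ↦ K t * (w t - a)) s μ :=
    hK.mul_bdd (hw.sub aestronglyMeasurable_const) (ae_restrict_of_forall_mem hs hwa)
  have hsplit : ∫ t in s, K t * w t ∂μ - a = ∫ t in s, K t * (w t - a) ∂μ :=
    calc ∫ t in s, K t * w t ∂μ - a = ∫ t in s, (K t * (w t - a) + K t * a) ∂μ - a := by
          simp only [mul_sub, sub_add_cancel]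
      _ = ∫ t in s, K t * (w t - a) ∂μ := by
          rw [integral_add hKwa (hK.mul_const a), integral_mul_const, hK1, one_mul,
            add_sub_cancel_right]
  rw [hsplit, ← integral_mul_const, ← Real.norm_eq_abs]
  refine norm_integral_le_of_norm_le (hK.abs.mul_const M) (ae_restrict_of_forall_mem hs ?_)
  intro t ht
  rw [Real.norm_eq_abs, abs_mul]
  exact mul_le_mul_of_nonneg_left (hwa t ht) (abs_nonneg _)

theorem mul_exp_mem_Icc {x r s : ℝ} (hx : 0 < x) (hr : 0 < r) (hs : |s| ≤ log r) :
    x * exp s ∈ Icc (x / r) (r * x) := by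
  obtain ⟨hlo, hhi⟩ := abs_le.mp hs
  constructor
  · calc x / r = x * exp (-log r) := by rw [exp_neg, exp_log hr, div_eq_mul_inv]
      _ ≤ x * exp s := by gcongr
  · calc x * exp s ≤ x * exp (log r) := by gcongr
      _ = r * x := by rw [exp_log hr, mul_comm]

theorem abs_exp_mul_sub_le {β A x h s a b : ℝ} (hβ0 : 0 ≤ β) (hβ1 : β ≤ 1) (hx : 0 < x)
    (hh1 : h ≤ 1) (hs : |s| ≤ h) (hab : |a - b| ≤ A * |x * exp s - x| ^ β) (hb0 : 0 ≤ b)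
    (hbA : b ≤ A) :
    |exp s * a - b| ≤ 6 * A * (h ^ β * x ^ β + h) := by
  have hh0 : 0 ≤ h := (abs_nonneg s).trans hs
  have hA0 : 0 ≤ A := hb0.trans hbA
  have hexp1 : |exp s - 1| ≤ 2 * h := (abs_exp_sub_one_le (hs.trans hh1)).trans (by linarith)
  have hexp3 : exp s ≤ 3 :=
    calc exp s ≤ exp 1 := exp_le_exp.2 ((le_abs_self s).trans (hs.trans hh1))
      _ ≤ 3 := by linarith [exp_one_lt_d9]
  have hdist : |x * exp s - x| ≤ 2 * h * x := by
    rw [show x * exp s - x = x * (exp s - 1) by ring, abs_mul, abs_of_pos hx, mul_comm x]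
    gcongr
  have hpow : |x * exp s - x| ^ β ≤ 2 * (h ^ β * x ^ β) :=
    calc |x * exp s - x| ^ β ≤ (2 * h * x) ^ β := by gcongr
      _ = 2 ^ β * (h ^ β * x ^ β) := by
        rw [mul_assoc, mul_rpow zero_le_two (by positivity), mul_rpow hh0 hx.le]
      _ ≤ 2 * (h ^ β * x ^ β) := by
        gcongr
        simpa using rpow_le_rpow_of_exponent_le one_le_two hβ1
  calc |exp s * a - b| = |exp s * (a - b) + (exp s - 1) * b| := by ring_nf
    _ ≤ exp s * |a - b| + |exp s - 1| * b := by
      refine (abs_add_le _ _).trans_eq ?_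
      rw [abs_mul, abs_mul, abs_of_pos (exp_pos s), abs_of_nonneg hb0]
    _ ≤ 3 * (A * (2 * (h ^ β * x ^ β))) + 2 * h * A := by
      gcongr
      exact hab.trans (by gcongr)
    _ ≤ 6 * A * (h ^ β * x ^ β + h) := by nlinarith [mul_nonneg hA0 hh0]

/-- Bias bound for log-kernel smoothing (case `β ≤ 1`): there is a constant `c = c(β)` with
`|∫ K_h(x,y) f(y) dy − f(x)| ≤ c A ‖K‖₁ (h^β x^β + h)`. -/
theorem stmt19 (β : ℝ) (hβ0 : 0 < β) (hβ1 : β ≤ 1) :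
    ∃ c : ℝ, 0 < c ∧
      ∀ (x r A h : ℝ) (f K : ℝ → ℝ),
        0 < x → 1 < r → 0 < A →
        Measurable f → Measurable K →
        (∀ t, 0 ≤ f t) → (∫ t in Set.Ioi (0:ℝ), f t = 1) →
        (∀ u ∈ Set.Icc (x / r) (r * x), ∀ v ∈ Set.Icc (x / r) (r * x),
          |f u - f v| ≤ A * |u - v| ^ β) →
        (∀ u ∈ Set.Icc (x / r) (r * x), f u ≤ A) →
        (∀ t : ℝ, 1 < |t| → K t = 0) →
        (∃ B : ℝ, ∀ t, |K t| ≤ B) →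
        (∫ t in Set.Icc (-1:ℝ) 1, K t = 1) →
        0 < h → h < min (Real.log r) 1 →
        |(∫ y in Set.Ioi (0:ℝ), (1 / (x * h)) * K (Real.log (y / x) / h) * f y) - f x|
          ≤ c * A * (∫ t in Set.Icc (-1:ℝ) 1, |K t|) * (h ^ β * x ^ β + h) := by
  refine ⟨6, by norm_num, ?_⟩
  intro x r A h f K hx hr _ hfm hKm hf0 _ hHol hfA hKsupp ⟨B, hKB⟩ hK1 hh hhmin
  obtain ⟨hhr, hh1⟩ := lt_min_iff.mp hhmin
  have hr0 : 0 < r := one_pos.trans hr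
  have hscaled : ∀ t ∈ Icc (-1 : ℝ) 1, |t * h| ≤ h := fun t ht ↦ by
    rw [abs_mul, abs_of_pos hh]
    exact mul_le_of_le_one_left hh.le (abs_le.mpr ht)
  have hxmem : x ∈ Icc (x / r) (r * x) := by
    simpa using mul_exp_mem_Icc (s := 0) hx hr0 (by simpa using (log_pos hr).le)
  have hbias : ∀ t ∈ Icc (-1 : ℝ) 1,
      |exp (t * h) * f (x * exp (t * h)) - f x| ≤ 6 * A * (h ^ β * x ^ β + h) := fun t ht ↦
    have hmem := mul_exp_mem_Icc hx hr0 ((hscaled t ht).trans hhr.le)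
    abs_exp_mul_sub_le hβ0.le hβ1 hx hh1.le (hscaled t ht) (hHol _ hmem _ hxmem) (hf0 x)
      (hfA x hxmem)
  have hIK : IntegrableOn K (Icc (-1 : ℝ) 1) :=
    Measure.integrableOn_of_bounded (M := B) measure_Icc_lt_top.ne hKm.aestronglyMeasurable
      (.of_forall hKB)
  rw [integral_logKernel_eq hx hh, ← setIntegral_eq_integral_of_forall_compl_eq_zero
    fun t ht ↦ by rw [hKsupp t (not_le.mp fun hle ↦ ht (abs_le.mp hle)), zero_mul]]
  refine (abs_setIntegral_mul_sub_le measurableSet_Icc hIK ?_ hK1 hbias).trans_eq (by ring)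
  fun_prop
end
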